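/- In the flower-shaped knowledge graph with cyclically colored petals, any two candidate targets a_{2j−1}^{(i)} and a_{2j}^{(i)} within the same petal are not related by any automorphism of the graph fixing the query head s and query relation r_0, i.e., the links (s, r_0, a_{2j−1}^{(i)}) and (s, r_0, a_{2j}^{(i)}) are not isomorphic; yet there exists an automorphism (π, φ) of the graph with φ(r_1^{(i)}) = r_2^{(i)} for some petal i, so any model whose relation representations are invariant under automorphisms must assign equal representations to r_1^{(i)} and r_2^{(i)}. -/

import Mathlib

namespace Petals

/-- Vertices of the flower-shaped knowledge graph: the stem `b_0, …, b_t`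
(`b_0 = s` is the central node), and for each of the `c` petals, the nodes
`a_1, …, a_{2(l+1)+1}` (the petal length parameter being `l + 1 ≥ 1`). -/
abbrev PV (c t l : ℕ) := Fin (t + 1) ⊕ (Fin c × Fin (2 * l + 3))

/-- Relation types: `none` is `r₀` (the stem/query relation); `some i` is `r₁^{(i)}`,
and the cyclic assignment sets `r₂^{(i)} = r₁^{(i+1 mod c)} = some (finRotate c i)`. -/
abbrev PR (c : ℕ) := Option (Fin c)

/-- The edges of the flower-shaped knowledge graph with `c` petals of length `l + 1` and
a stem of length `t`: consecutive stem edges of type `r₀`; for each petal `i`, the two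
attachment edges `(s, r₁^{(i)}, a₁^{(i)})` and `(s, r₂^{(i)}, a₂^{(i)})`, the internal
edges `(a_p^{(i)}, r₁^{(i)}, a_{p+2}^{(i)})`, and the closing edge into the last node. -/
def petalsE (c t l : ℕ) : Set (PV c t l × PR c × PV c t l) :=
  {x | ∃ j : Fin t, x = (Sum.inl j.castSucc, none, Sum.inl j.succ)} ∪
  {x | ∃ i : Fin c, x = (Sum.inl 0, some i, Sum.inr (i, ⟨0, by omega⟩))} ∪
  {x | ∃ i : Fin c, x = (Sum.inl 0, some (finRotate c i), Sum.inr (i, ⟨1, by omega⟩))} ∪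
  {x | ∃ (i : Fin c) (p : ℕ) (hp : p + 2 ≤ 2 * l + 2),
      x = (Sum.inr (i, ⟨p, by omega⟩), some i, Sum.inr (i, ⟨p + 2, by omega⟩))} ∪
  {x | ∃ i : Fin c,
      x = (Sum.inr (i, ⟨2 * l + 1, by omega⟩), some i, Sum.inr (i, ⟨2 * l + 2, by omega⟩))}

/-- The node permutation rotating the petals (and fixing the stem pointwise). -/
def πrot (c t l : ℕ) : PV c t l ≃ PV c t l :=
  Equiv.sumCongr (Equiv.refl _) (Equiv.prodCongr (finRotate c) (Equiv.refl _))

/-- The relation permutation cyclically shifting the petal relation types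
(and fixing `r₀`). -/
def φrot (c : ℕ) : PR c ≃ PR c := Equiv.optionCongr (finRotate c)

/-- An automorphism of the flower-shaped knowledge graph. -/
def IsAuto (c t l : ℕ) (π : PV c t l ≃ PV c t l) (φ : PR c ≃ PR c) : Prop :=
  ∀ (h : PV c t l) (r : PR c) (t' : PV c t l),
    (h, r, t') ∈ petalsE c t l ↔ (π h, φ r, π t') ∈ petalsE c t l

/-!
Rotating the petals, together with the matching cyclic shift of the petal relation types, is an
automorphism, and it sends `r₁^{(i)}` to `r₂^{(i)}`; this gives (b) and (c).

For (a), number the nodes of a petal `0, …, 2l+2` as in `PV`. The only edge into a petal node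
`p` with `2 ≤ p ≤ 2l+1` comes from `p - 2`, so an automorphism fixing `s` that sends node `2k` to
node `2k+1` also sends node `0` to node `1`. The attachment edges at `s` then force
`φ r₁^{(i)} = r₂^{(i)}`, while the image of the edge `0 → 2` leaves node `1`, forcing
`φ r₁^{(i)} = r₁^{(i)}`. For `c ≥ 2` these types differ.
-/

variable {c t l : ℕ}

theorem finRotate_ne_self (hc : 2 ≤ c) (i : Fin c) : finRotate c i ≠ i :=
  Equiv.Perm.mem_support.mp (by simp [support_finRotate_of_le hc])

def petalPerm (e : Fin c ≃ Fin c) : PV c t l ≃ PV c t l :=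
  Equiv.sumCongr (Equiv.refl _) (Equiv.prodCongr e (Equiv.refl _))

theorem petalPerm_symm (e : Fin c ≃ Fin c) :
    petalPerm (t := t) (l := l) e.symm = (petalPerm e).symm :=
  rfl

theorem map_mem_petalsE (e : Fin c ≃ Fin c) (he : ∀ i, e (finRotate c i) = finRotate c (e i))
    {h : PV c t l} {r : PR c} {t' : PV c t l} (hx : (h, r, t') ∈ petalsE c t l) :
    (petalPerm e h, Equiv.optionCongr e r, petalPerm e t') ∈ petalsE c t l := by
  simp only [petalsE, Set.mem_union, Set.mem_ofPred_eq, Prod.mk.injEq] at hx ⊢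
  rcases hx with ((((⟨j, rfl, rfl, rfl⟩ | ⟨i, rfl, rfl, rfl⟩) | ⟨i, rfl, rfl, rfl⟩) |
      ⟨i, p, hp, rfl, rfl, rfl⟩) | ⟨i, rfl, rfl, rfl⟩)
  · exact Or.inl (Or.inl (Or.inl (Or.inl ⟨j, by simp [petalPerm]⟩)))
  · exact Or.inl (Or.inl (Or.inl (Or.inr ⟨e i, by simp [petalPerm]⟩)))
  · exact Or.inl (Or.inl (Or.inr ⟨e i, by simp [petalPerm, he, -finRotate_apply]⟩))
  · exact Or.inl (Or.inr ⟨e i, p, hp, by simp [petalPerm]⟩)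
  · exact Or.inr ⟨e i, by simp [petalPerm]⟩

theorem isAuto_petalPerm (e : Fin c ≃ Fin c)
    (he : ∀ i, e (finRotate c i) = finRotate c (e i)) :
    IsAuto c t l (petalPerm e) (Equiv.optionCongr e) := by
  have he_symm : ∀ i, e.symm (finRotate c i) = finRotate c (e.symm i) := fun i =>
    e.symm_apply_eq.mpr (by rw [he, e.apply_symm_apply])
  refine fun h r t' => ⟨map_mem_petalsE e he, fun hx => ?_⟩
  simpa only [petalPerm_symm, Equiv.optionCongr_symm, Equiv.symm_apply_apply] using
    map_mem_petalsE e.symm he_symm hx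

theorem isAuto_rot : IsAuto c t l (πrot c t l) (φrot c) :=
  isAuto_petalPerm (finRotate c) fun _ => rfl

theorem attach_mem_petalsE (i : Fin c) :
    ((Sum.inl 0 : PV c t l), some i, Sum.inr (i, ⟨0, by omega⟩)) ∈ petalsE c t l :=
  Or.inl (Or.inl (Or.inl (Or.inr ⟨i, rfl⟩)))

theorem internal_mem_petalsE (i : Fin c) {p q : Fin (2 * l + 3)} (hq : q.val = p.val + 2) :
    ((Sum.inr (i, p) : PV c t l), some i, Sum.inr (i, q)) ∈ petalsE c t l := by
  obtain ⟨p, hp⟩ := p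
  obtain ⟨q, hq'⟩ := q
  simp only at hq
  subst hq
  exact Or.inl (Or.inr ⟨i, p, by omega, rfl⟩)

theorem label_eq_of_inr_mem_petalsE {i : Fin c} {p : Fin (2 * l + 3)} {r : PR c}
    {t' : PV c t l} (hx : (Sum.inr (i, p), r, t') ∈ petalsE c t l) : r = some i := by
  simp only [petalsE, Set.mem_union, Set.mem_ofPred_eq, Prod.mk.injEq] at hx
  rcases hx with ((((⟨_, h, -⟩ | ⟨_, h, -⟩) | ⟨_, h, -⟩) | ⟨_, _, _, h, hr, -⟩) | ⟨_, h, hr, -⟩)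
    <;> simp_all

theorem in_edge_of_mem_petalsE {h : PV c t l} {r : PR c} {i : Fin c} {p : Fin (2 * l + 3)}
    (hp : p.val ≤ 2 * l + 1) (hx : (h, r, Sum.inr (i, p)) ∈ petalsE c t l) :
    (p.val = 0 ∧ h = Sum.inl 0 ∧ r = some i) ∨
    (p.val = 1 ∧ h = Sum.inl 0 ∧ r = some (finRotate c i)) ∨
    ∃ q : Fin (2 * l + 3), q.val + 2 = p.val ∧ h = Sum.inr (i, q) ∧ r = some i := by
  simp only [petalsE, Set.mem_union, Set.mem_ofPred_eq, Prod.mk.injEq] at hx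
  rcases hx with ((((⟨_, -, -, h⟩ | ⟨_, rfl, rfl, h⟩) | ⟨_, rfl, rfl, h⟩) |
      ⟨_, q, _, rfl, rfl, h⟩) | ⟨_, -, -, h⟩)
  · simp at h
  · obtain ⟨rfl, rfl⟩ := Prod.mk.inj (Sum.inr_injective h)
    simp
  · obtain ⟨rfl, rfl⟩ := Prod.mk.inj (Sum.inr_injective h)
    simp
  · obtain ⟨rfl, rfl⟩ := Prod.mk.inj (Sum.inr_injective h)
    exact Or.inr (Or.inr ⟨_, rfl, rfl, rfl⟩)
  · obtain ⟨rfl, rfl⟩ := Prod.mk.inj (Sum.inr_injective h)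
    simp at hp

theorem IsAuto.petal_apply_ne_succ (hc : 2 ≤ c) {π : PV c t l ≃ PV c t l} {φ : PR c ≃ PR c}
    (hA : IsAuto c t l π φ) (hs : π (Sum.inl 0) = Sum.inl 0) (i : Fin c) (k : ℕ) :
    ∀ p q : Fin (2 * l + 3), p.val = 2 * k → q.val = p.val + 1 →
      π (Sum.inr (i, p)) ≠ Sum.inr (i, q) := by
  induction k with
  | zero =>
    intro p q hp hq hπ
    rw [show p = ⟨0, by omega⟩ from Fin.ext hp] at hπ
    have hφ : φ (some i) = some (finRotate c i) := by
      have hx := (hA _ _ _).mp (attach_mem_petalsE (t := t) (l := l) i)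
      rw [hs, hπ] at hx
      rcases in_edge_of_mem_petalsE (by omega) hx with ⟨h0, -⟩ | ⟨-, -, hr⟩ | ⟨_, h, -⟩
      · omega
      · exact hr
      · omega
    have hx := (hA _ _ _).mp
      (internal_mem_petalsE (t := t) i (p := ⟨0, by omega⟩) (q := ⟨2, by omega⟩) rfl)
    rw [hπ, hφ] at hx
    exact finRotate_ne_self hc i (Option.some_injective _ (label_eq_of_inr_mem_petalsE hx))
  | succ k ih =>
    intro p q hp hq hπ
    have hx := (hA _ _ _).mp
      (internal_mem_petalsE (t := t) i (p := ⟨2 * k, by omega⟩) (q := p) (by simp [hp]; omega))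
    rw [hπ] at hx
    rcases in_edge_of_mem_petalsE (by omega) hx with ⟨h0, -⟩ | ⟨h1, -⟩ | ⟨q', hq', hq'π, -⟩
    · omega
    · omega
    · exact ih _ q' rfl (by simp; omega) hq'π

/-- In the flower-shaped knowledge graph with cyclically colored petals:
(a) the two candidate targets `a_{2j−1}^{(i)}` and `a_{2j}^{(i)}` within the same petal
are not related by any automorphism fixing the query head `s` and the query relation
`r₀`, i.e. the links `(s, r₀, a_{2j−1}^{(i)})` and `(s, r₀, a_{2j}^{(i)})` are not
isomorphic; yet (b) there exists an automorphism `(π, φ)` of the graph with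
`φ(r₁^{(i)}) = r₂^{(i)} ≠ r₁^{(i)}` for some petal `i`, so (c) any model whose relation
representations are invariant under automorphisms must assign equal representations to
`r₁^{(i)}` and `r₂^{(i)}`. -/
theorem stmt_17 (c t l : ℕ) (hc : 2 ≤ c) :
    (∀ (i : Fin c) (j : ℕ), 1 ≤ j → ∀ hj : j ≤ l + 1,
      ¬ ∃ (π : PV c t l ≃ PV c t l) (φ : PR c ≃ PR c),
        IsAuto c t l π φ ∧ π (Sum.inl 0) = Sum.inl 0 ∧ φ none = none ∧
          π (Sum.inr (i, ⟨2 * j - 2, by omega⟩)) = Sum.inr (i, ⟨2 * j - 1, by omega⟩))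
      ∧ (∃ (π : PV c t l ≃ PV c t l) (φ : PR c ≃ PR c), IsAuto c t l π φ ∧
          ∃ i : Fin c, φ (some i) = some (finRotate c i) ∧ some (finRotate c i) ≠ some i)
      ∧ (∀ (X : Type) (rep : PR c → X),
          (∀ (π : PV c t l ≃ PV c t l) (φ : PR c ≃ PR c),
            IsAuto c t l π φ → ∀ r, rep (φ r) = rep r) →
          ∀ i : Fin c, rep (some i) = rep (some (finRotate c i))) := by
  refine ⟨?_, ?_, ?_⟩
  · rintro i j hj _ ⟨π, φ, hA, hs, -, hπ⟩
    exact hA.petal_apply_ne_succ hc hs i (j - 1) _ _ (by simp; omega) (by simp; omega) hπ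
  · exact ⟨πrot c t l, φrot c, isAuto_rot, ⟨0, by omega⟩, rfl,
      by simpa using finRotate_ne_self hc _⟩
  · intro X rep hinv i
    exact (hinv _ _ isAuto_rot (some i)).symm

end Petals
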